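/- arXiv:2110.00190 — 7 statements merged into one kernel-verified Lean document; each statement's English description precedes it below -/
import Mathlib

section
/- Let G be a topological group acting continuously on a locally compact Hausdorff space X. Let x ∈ X and let K ⊆ G be a compact subset such that K ∩ G_x = ∅, where G_x = {g ∈ G : g·x = x} is the stabilizer of x. Then there exists an open neighbourhood α of x such that gα ∩ α = ∅ for all g ∈ K. -/
/-!
Separating `g • x` from `x` and using continuity of the action at `(g, x)` gives a neighbourhood
`V` of `x` with `h • V` disjoint from `V` for all `h` near `g`. By compactness of `K`, finitely
many such neighbourhoods cover all of `K`, and their intersection works for every `g ∈ K`.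
-/

open Pointwise Filter Topology

section DisjointTranslates

variable {G X : Type*} [TopologicalSpace G] [TopologicalSpace X] [T2Space X]
  [SMul G X] [ContinuousSMul G X]

theorem exists_mem_nhds_eventually_disjoint_smul {g : G} {x : X} (hgx : g • x ≠ x) :
    ∃ V ∈ 𝓝 x, ∀ᶠ h in 𝓝 g, Disjoint (h • V) V := by
  obtain ⟨A, B, hA, hB, hgxA, hxB, hAB⟩ := t2_separation hgx
  have hA' : (fun p : G × X => p.1 • p.2) ⁻¹' A ∈ 𝓝 (g, x) :=
    continuous_smul.continuousAt.preimage_mem_nhds (hA.mem_nhds hgxA)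
  obtain ⟨W, hW, U, hU, hWU⟩ := mem_nhds_prod_iff.mp hA'
  refine ⟨U ∩ B, inter_mem hU (hB.mem_nhds hxB), eventually_of_mem hW fun h hh => ?_⟩
  refine hAB.mono ?_ Set.inter_subset_right
  rintro _ ⟨y, hy, rfl⟩
  exact hWU (Set.mk_mem_prod hh hy.1)

theorem IsCompact.exists_mem_nhds_forall_disjoint_smul {K : Set G} (hK : IsCompact K) {x : X}
    (hKx : ∀ g ∈ K, g • x ≠ x) : ∃ V ∈ 𝓝 x, ∀ g ∈ K, Disjoint (g • V) V := by
  refine hK.induction_on (p := fun s => ∃ V ∈ 𝓝 x, ∀ g ∈ s, Disjoint (g • V) V)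
    ⟨Set.univ, univ_mem, fun _ h => h.elim⟩ ?_ ?_ ?_
  · exact fun s t hst ⟨V, hV, hVt⟩ => ⟨V, hV, fun g hg => hVt g (hst hg)⟩
  · rintro s t ⟨V, hV, hVs⟩ ⟨V', hV', hV't⟩
    refine ⟨V ∩ V', inter_mem hV hV', ?_⟩
    rintro g (hg | hg)
    · exact (hVs g hg).mono (Set.smul_set_mono Set.inter_subset_left) Set.inter_subset_left
    · exact (hV't g hg).mono (Set.smul_set_mono Set.inter_subset_right) Set.inter_subset_right
  · intro g hg
    obtain ⟨V, hV, hWV⟩ := exists_mem_nhds_eventually_disjoint_smul (hKx g hg)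
    exact ⟨_, mem_nhdsWithin_of_mem_nhds hWV, V, hV, fun _ h => h⟩

end DisjointTranslates

theorem stmt_2_general {G X : Type*} [Group G] [TopologicalSpace G]
    [TopologicalSpace X] [T2Space X]
    [MulAction G X] [ContinuousSMul G X]
    (x : X) (K : Set G) (hK : IsCompact K)
    (hKGx : ∀ g ∈ K, g • x ≠ x) :
    ∃ α : Set X, IsOpen α ∧ x ∈ α ∧ ∀ g ∈ K, (g • α) ∩ α = ∅ := by
  obtain ⟨V, hV, hKV⟩ := hK.exists_mem_nhds_forall_disjoint_smul hKGx
  refine ⟨interior V, isOpen_interior, mem_interior_iff_mem_nhds.mpr hV, fun g hg => ?_⟩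
  exact Set.disjoint_iff_inter_eq_empty.mp <|
    (hKV g hg).mono (Set.smul_set_mono interior_subset) interior_subset

/-- Let a topological group `G` act continuously on a locally compact
Hausdorff space `X`. If `x ∈ X` and `K ⊆ G` is a compact subset disjoint from the
stabilizer of `x`, then there is an open neighbourhood `α` of `x` with `gα ∩ α = ∅`
for all `g ∈ K`. -/
theorem stmt_2 {G X : Type*} [Group G] [TopologicalSpace G] [IsTopologicalGroup G]
    [TopologicalSpace X] [LocallyCompactSpace X] [T2Space X]
    [MulAction G X] [ContinuousSMul G X]
    (x : X) (K : Set G) (hK : IsCompact K)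
    (hKGx : ∀ g ∈ K, g • x ≠ x) :
    ∃ α : Set X, IsOpen α ∧ x ∈ α ∧ ∀ g ∈ K, (g • α) ∩ α = ∅ :=
  stmt_2_general x K hK hKGx
end

section
/- Let X be a geodesic δ-hyperbolic metric space, let g be a bijective isometry of X, and let a > 0. If there exists a point x ∈ X with d(g⁻¹x, gx) ≥ d(x, gx) + 2δ + a, then d(gⁿx, x) ≥ n·a for every integer n ≥ 1; in particular |g|_∞ ≥ a > 0, so g is a hyperbolic isometry. -/
/-- A metric space is `δ`-hyperbolic if the Gromov products
`(x|y)_t = (d(x,t) + d(y,t) − d(x,y))/2` satisfy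
`(x|z)_t ≥ min((x|y)_t, (y|z)_t) − δ` for all `x, y, z, t`. -/
def GromovHyperbolic (X : Type*) [MetricSpace X] (δ : ℝ) : Prop :=
  ∀ x y z t : X,
    (dist x t + dist z t - dist x z) / 2 ≥
      min ((dist x t + dist y t - dist x y) / 2) ((dist y t + dist z t - dist y z) / 2) - δ

/-- A metric space is geodesic if every pair of points is joined by a geodesic
segment: a path `f` with `f 0 = x`, `f (dist x y) = y` which is isometric on
`[0, dist x y]`. -/
def GeodesicSpace (X : Type*) [MetricSpace X] : Prop :=
  ∀ x y : X, ∃ f : ℝ → X, f 0 = x ∧ f (dist x y) = y ∧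
    ∀ s ∈ Set.Icc (0 : ℝ) (dist x y), ∀ t ∈ Set.Icc (0 : ℝ) (dist x y),
      dist (f s) (f t) = |s - t|

/-!
Write `D n = d(gⁿx, x)`. Since `g` is an isometry, `d(gⁿ⁺¹x, gⁿ⁺²x) = d(x, gx)` while
`d(gⁿx, gⁿ⁺²x) = d(g⁻¹x, gx)` exceeds it by `2δ + a`. The four-point condition at the middle
point `gⁿ⁺¹x` then forces `D (n + 2) ≥ D (n + 1) + a` as soon as `D (n + 1) ≥ D n + a`, so by
induction `D` grows by at least `a` per step. The sequence `D` is subadditive, so `D n / n`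
converges by Fekete's lemma, and the limit does not depend on the base point because
`|d(gⁿy, y) − d(gⁿx, x)| ≤ 2 d(x, y)`.
-/

open Filter Topology

section

variable {X : Type*} [MetricSpace X]

theorem GromovHyperbolic.dist_add_le_of_dist_add_le {δ a : ℝ} (hhyp : GromovHyperbolic X δ)
    (ha : 0 < a) {o p q r : X} (hpq : dist p q + 2 * δ + a ≤ dist p r)
    (hqr : dist q r + 2 * δ + a ≤ dist p r) (hopq : dist o p + a ≤ dist o q) :
    dist o q + a ≤ dist o r := by
  have H := hhyp p o r q
  rw [ge_iff_le, sub_le_iff_le_add, min_le_iff, dist_comm p o, dist_comm r q] at H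
  rcases H with H | H <;> linarith

namespace IsometryEquiv

theorem dist_pow_apply_pow_apply (g : X ≃ᵢ X) (x : X) (m n : ℕ) :
    dist ((g ^ m) x) ((g ^ (m + n)) x) = dist x ((g ^ n) x) := by
  rw [pow_add, mul_apply, (g ^ m).dist_eq]

theorem subadditive_dist_pow_apply (g : X ≃ᵢ X) (x : X) :
    Subadditive fun n => dist ((g ^ n) x) x := fun m n =>
  calc dist ((g ^ (m + n)) x) x
      ≤ dist ((g ^ (m + n)) x) ((g ^ m) x) + dist ((g ^ m) x) x := dist_triangle _ _ _
    _ = dist ((g ^ n) x) x + dist ((g ^ m) x) x := by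
      rw [dist_comm, dist_pow_apply_pow_apply, dist_comm]
    _ = _ := add_comm _ _

theorem tendsto_dist_pow_apply_div (g : X ≃ᵢ X) (x : X) :
    Tendsto (fun n : ℕ => dist ((g ^ n) x) x / n) atTop
      (𝓝 (g.subadditive_dist_pow_apply x).lim) :=
  (g.subadditive_dist_pow_apply x).tendsto_lim
    ⟨0, by rintro _ ⟨n, rfl⟩; positivity⟩

theorem abs_dist_pow_apply_sub_le (g : X ≃ᵢ X) (x y : X) (n : ℕ) :
    |dist ((g ^ n) y) y - dist ((g ^ n) x) x| ≤ 2 * dist x y := by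
  have hy := dist_triangle4 ((g ^ n) y) ((g ^ n) x) x y
  have hx := dist_triangle4 ((g ^ n) x) ((g ^ n) y) y x
  rw [(g ^ n).dist_eq] at hx hy
  rw [abs_le, dist_comm y x] at *
  constructor <;> linarith

theorem tendsto_dist_pow_apply_div_of_tendsto {g : X ≃ᵢ X} {x : X} {L : ℝ}
    (hx : Tendsto (fun n : ℕ => dist ((g ^ n) x) x / n) atTop (𝓝 L)) (y : X) :
    Tendsto (fun n : ℕ => dist ((g ^ n) y) y / n) atTop (𝓝 L) := by
  have hdiff : Tendsto (fun n : ℕ => dist ((g ^ n) y) y / n - dist ((g ^ n) x) x / n)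
      atTop (𝓝 0) := by
    refine squeeze_zero_norm (fun n => ?_) (tendsto_const_div_atTop_nhds_zero_nat (2 * dist x y))
    rw [div_sub_div_same, Real.norm_eq_abs, abs_div, Nat.abs_cast]
    exact div_le_div_of_nonneg_right (g.abs_dist_pow_apply_sub_le x y n) n.cast_nonneg
  simpa using hdiff.add hx

theorem natCast_mul_le_dist_pow_apply {δ a : ℝ} (hδ : 0 ≤ δ) (ha : 0 < a)
    (hhyp : GromovHyperbolic X δ) (g : X ≃ᵢ X) {x : X}
    (hx : dist x (g x) + 2 * δ + a ≤ dist (g⁻¹ x) (g x)) (n : ℕ) :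
    n * a ≤ dist ((g ^ n) x) x := by
  have htwo : ∀ m, dist ((g ^ m) x) ((g ^ (m + 2)) x) = dist (g⁻¹ x) (g x) := fun m => by
    rw [dist_pow_apply_pow_apply, ← g.dist_eq (g⁻¹ x), apply_inv_self, pow_two, mul_apply]
  have hone : ∀ m, dist ((g ^ m) x) ((g ^ (m + 1)) x) = dist x (g x) := fun m => by
    rw [dist_pow_apply_pow_apply, pow_one]
  have hstep : ∀ m, dist x ((g ^ m) x) + a ≤ dist x ((g ^ (m + 1)) x) := by
    intro m
    induction m with
    | zero =>
      have htri := dist_triangle x (g x) ((g ^ 2) x)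
      have h2 := htwo 0
      have h1 := hone 1
      simp only [pow_zero, coe_one, id, zero_add, pow_one, one_add_one_eq_two, dist_self]
        at h2 h1 ⊢
      linarith
    | succ m ih =>
      refine hhyp.dist_add_le_of_dist_add_le ha ?_ ?_ ih <;>
        rw [add_assoc, htwo, hone] <;> linarith
  induction n with
  | zero => simp
  | succ n ih =>
    have := hstep n
    rw [dist_comm x, dist_comm x] at this
    push_cast
    linarith

end IsometryEquiv

end

theorem stmt_4_general {X : Type*} [MetricSpace X] (δ : ℝ) (hδ : 0 ≤ δ)
    (hhyp : GromovHyperbolic X δ)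
    (g : X ≃ᵢ X) (a : ℝ) (ha : 0 < a) (x : X)
    (hx : dist (g⁻¹ x) (g x) ≥ dist x (g x) + 2 * δ + a) :
    (∀ n : ℕ, 1 ≤ n → (n : ℝ) * a ≤ dist ((g ^ n) x) x) ∧
    ∃ L : ℝ, a ≤ L ∧ ∀ y : X,
      Filter.Tendsto (fun n : ℕ => dist ((g ^ n) y) y / n) Filter.atTop (nhds L) := by
  have hlower := g.natCast_mul_le_dist_pow_apply hδ ha hhyp hx
  have hlim := g.tendsto_dist_pow_apply_div x
  refine ⟨fun n _ => hlower n, _, ?_, g.tendsto_dist_pow_apply_div_of_tendsto hlim⟩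
  refine ge_of_tendsto hlim (eventually_atTop.2 ⟨1, fun n hn => ?_⟩)
  rw [le_div_iff₀ (by exact_mod_cast hn), mul_comm]
  exact hlower n

/-- Let `X` be a geodesic `δ`-hyperbolic metric space, `g` a bijective
isometry of `X` and `a > 0`. If some point `x` satisfies
`d(g⁻¹x, gx) ≥ d(x, gx) + 2δ + a`, then `d(gⁿx, x) ≥ n·a` for every `n ≥ 1`; in
particular the asymptotic displacement length `|g|_∞` (the limit of `d(gⁿy, y)/n`, which
exists and is independent of `y`) satisfies `|g|_∞ ≥ a > 0`, i.e. `g` is hyperbolic. -/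
theorem stmt_4 {X : Type*} [MetricSpace X] (δ : ℝ) (hδ : 0 ≤ δ)
    (hhyp : GromovHyperbolic X δ) (hgeo : GeodesicSpace X)
    (g : X ≃ᵢ X) (a : ℝ) (ha : 0 < a) (x : X)
    (hx : dist (g⁻¹ x) (g x) ≥ dist x (g x) + 2 * δ + a) :
    (∀ n : ℕ, 1 ≤ n → (n : ℝ) * a ≤ dist ((g ^ n) x) x) ∧
    ∃ L : ℝ, a ≤ L ∧ ∀ y : X,
      Filter.Tendsto (fun n : ℕ => dist ((g ^ n) y) y / n) Filter.atTop (nhds L) :=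
  stmt_4_general δ hδ hhyp g a ha x hx
end

section
/- Let X be a geodesic δ-hyperbolic metric space and let (g_n) be a sequence of bijective isometries of X converging pointwise to a bijective isometry g (that is, g_n(x) → g(x) for every x ∈ X). If g is hyperbolic (|g|_∞ > 0), then g_n is hyperbolic for all sufficiently large n. -/
open Filter Topology

section Stmt6Aux

variable {X : Type*} [MetricSpace X]

private lemma aux_pow_add (h : X ≃ᵢ X) (a b : ℕ) (x : X) :
    (h ^ (a + b)) x = (h ^ a) ((h ^ b) x) := by
  rw [pow_add]; rfl

private lemma aux_dist_pow (h : X ≃ᵢ X) (n : ℕ) (x y : X) :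
    dist ((h ^ n) x) ((h ^ n) y) = dist x y :=
  (h ^ n).isometry.dist_eq x y

private lemma aux_subadd (h : X ≃ᵢ X) (y : X) :
    Subadditive (fun k : ℕ => dist ((h ^ k) y) y) := by
  intro m n
  calc dist ((h ^ (m + n)) y) y
      ≤ dist ((h ^ (m + n)) y) ((h ^ m) y) + dist ((h ^ m) y) y := dist_triangle _ _ _
    _ = dist ((h ^ n) y) y + dist ((h ^ m) y) y := by
        rw [aux_pow_add, aux_dist_pow]
    _ ≤ _ := by rw [add_comm]

/-- The key chain lemma: if `d(h²x₀,x₀) > d(hx₀,x₀) + 2δ` then the orbit of `x₀`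
escapes linearly. Only the four-point condition is needed. -/
private lemma aux_key {δ : ℝ} (hδ : 0 ≤ δ) (hhyp : GromovHyperbolic X δ)
    (h : X ≃ᵢ X) (x₀ : X)
    (hcrit : dist ((h ^ 2) x₀) x₀ > dist ((h ^ 1) x₀) x₀ + 2 * δ) (n : ℕ) :
    (n : ℝ) * (dist ((h ^ 2) x₀) x₀ - dist ((h ^ 1) x₀) x₀ - 2 * δ)
      ≤ dist ((h ^ n) x₀) x₀ := by
  set a : ℕ → ℝ := fun k => dist ((h ^ k) x₀) x₀ with ha
  have f1 : ∀ k : ℕ, dist ((h ^ (k + 1)) x₀) ((h ^ k) x₀) = a 1 := by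
    intro k
    rw [aux_pow_add]
    exact aux_dist_pow h k _ _
  have f2 : ∀ k : ℕ, dist ((h ^ (k + 2)) x₀) ((h ^ k) x₀) = a 2 := by
    intro k
    rw [aux_pow_add]
    exact aux_dist_pow h k _ _
  have ha2 : a 2 ≤ a 1 + a 1 := by
    calc a 2 = dist ((h ^ (1 + 1)) x₀) x₀ := rfl
    _ ≤ dist ((h ^ (1 + 1)) x₀) ((h ^ 1) x₀) + dist ((h ^ 1) x₀) x₀ := dist_triangle _ _ _
    _ = a 1 + a 1 := by rw [f1]
  have hq : ∀ k : ℕ, (a (k + 1) + a 1 - a (k + 2)) / 2 ≤ (a 1 - a 2 / 2) + δ := by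
    intro k
    induction k with
    | zero => simp only [zero_add]; linarith
    | succ k ih =>
      have H := hhyp ((h ^ (k + 1)) x₀) x₀ ((h ^ (k + 3)) x₀) ((h ^ (k + 2)) x₀)
      rw [dist_comm ((h ^ (k + 1)) x₀) ((h ^ (k + 2)) x₀)] at H
      rw [f1 (k + 1)] at H
      rw [show k + 3 = (k + 2) + 1 from rfl, f1 (k + 2)] at H
      rw [dist_comm ((h ^ (k + 1)) x₀) ((h ^ ((k + 2) + 1)) x₀)] at H
      rw [show (k + 2) + 1 = (k + 1) + 2 from rfl, f2 (k + 1)] at H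
      rw [dist_comm x₀ ((h ^ (k + 2)) x₀)] at H
      rw [dist_comm x₀ ((h ^ (k + 1 + 2)) x₀)] at H
      rcases le_or_gt ((a 1 + a (k + 2) - a (k + 1)) / 2)
          ((a (k + 2) + a 1 - a (k + 1 + 2)) / 2) with hc | hc
      · rw [min_eq_left hc] at H
        linarith [hcrit, ih]
      · rw [min_eq_right hc.le] at H
        linarith
  have step : ∀ k : ℕ, a (k + 1) + (a 2 - a 1 - 2 * δ) ≤ a (k + 2) := by
    intro k; have := hq k; linarith
  have a0 : a 0 = 0 := by simp [ha]
  have main : ∀ k : ℕ, ((k : ℝ) + 1) * (a 2 - a 1 - 2 * δ) ≤ a (k + 1) := by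
    intro k
    induction k with
    | zero => simp only [Nat.cast_zero, zero_add, one_mul]; linarith
    | succ k ih =>
      have := step k
      push_cast
      push_cast at ih
      linarith
  cases n with
  | zero => simp [a0]
  | succ k =>
    have := main k
    push_cast
    push_cast at this
    linarith

/-- Every isometry has an asymptotic displacement length, independent of the basepoint. -/
private lemma aux_limit (h : X ≃ᵢ X) (x₀ : X) :
    ∃ l : ℝ, ∀ y : X, Tendsto (fun k : ℕ => dist ((h ^ k) y) y / k) atTop (𝓝 l) := by
  have hs := aux_subadd h x₀
  have hbdd : BddBelow (Set.range fun k : ℕ => dist ((h ^ k) x₀) x₀ / (k : ℝ)) := by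
    refine ⟨0, ?_⟩; rintro r ⟨k, rfl⟩; positivity
  have hx := hs.tendsto_lim hbdd
  refine ⟨hs.lim, fun y => ?_⟩
  have hub : ∀ k : ℕ, dist ((h ^ k) y) y ≤ dist ((h ^ k) x₀) x₀ + 2 * dist y x₀ := by
    intro k
    calc dist ((h ^ k) y) y
        ≤ dist ((h ^ k) y) ((h ^ k) x₀) + dist ((h ^ k) x₀) x₀ + dist x₀ y :=
          dist_triangle4 _ _ _ _
      _ = dist ((h ^ k) x₀) x₀ + 2 * dist y x₀ := by
          rw [aux_dist_pow, dist_comm x₀ y]; ring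
  have hlb : ∀ k : ℕ, dist ((h ^ k) x₀) x₀ - 2 * dist y x₀ ≤ dist ((h ^ k) y) y := by
    intro k
    have : dist ((h ^ k) x₀) x₀ ≤ dist ((h ^ k) y) y + 2 * dist y x₀ := by
      calc dist ((h ^ k) x₀) x₀
          ≤ dist ((h ^ k) x₀) ((h ^ k) y) + dist ((h ^ k) y) y + dist y x₀ :=
            dist_triangle4 _ _ _ _
        _ = dist ((h ^ k) y) y + 2 * dist y x₀ := by
            rw [aux_dist_pow, dist_comm x₀ y]; ring
    linarith
  have ht0 : Tendsto (fun k : ℕ => 2 * dist y x₀ / (k : ℝ)) atTop (𝓝 0) :=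
    tendsto_const_nhds.div_atTop tendsto_natCast_atTop_atTop
  refine tendsto_of_tendsto_of_tendsto_of_le_of_le
    (g := fun k : ℕ => dist ((h ^ k) x₀) x₀ / k - 2 * dist y x₀ / k)
    (h := fun k : ℕ => dist ((h ^ k) x₀) x₀ / k + 2 * dist y x₀ / k)
    (by simpa using hx.sub ht0) (by simpa using hx.add ht0) ?_ ?_
  · intro k
    rcases Nat.eq_zero_or_pos k with rfl | hk
    · simp
    · have hkp : (0 : ℝ) < k := by exact_mod_cast hk
      simp only [← sub_div]
      gcongr
      exact hlb k
  · intro k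
    rcases Nat.eq_zero_or_pos k with rfl | hk
    · simp
    · have hkp : (0 : ℝ) < k := by exact_mod_cast hk
      simp only [← add_div]
      gcongr
      exact hub k

/-- Pointwise convergence of isometries implies pointwise convergence of their powers. -/
private lemma aux_powconv (gseq : ℕ → X ≃ᵢ X) (g : X ≃ᵢ X)
    (hconv : ∀ x : X, Tendsto (fun n : ℕ => gseq n x) atTop (𝓝 (g x)))
    (k : ℕ) (x : X) :
    Tendsto (fun n : ℕ => ((gseq n) ^ k) x) atTop (𝓝 ((g ^ k) x)) := by
  induction k generalizing x with
  | zero =>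
    simp only [pow_zero, IsometryEquiv.coe_one, id_eq]
    exact tendsto_const_nhds
  | succ k ih =>
    rw [tendsto_iff_dist_tendsto_zero]
    have h1 := tendsto_iff_dist_tendsto_zero.mp (ih x)
    have h2 := tendsto_iff_dist_tendsto_zero.mp (hconv ((g ^ k) x))
    refine squeeze_zero (fun n => dist_nonneg) (fun n => ?_) (by simpa using h1.add h2)
    have e1 : ((gseq n) ^ (k + 1)) x = (gseq n) (((gseq n) ^ k) x) := by
      rw [pow_succ']; rfl
    have e2 : (g ^ (k + 1)) x = g ((g ^ k) x) := by rw [pow_succ']; rfl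
    rw [e1, e2]
    calc dist ((gseq n) (((gseq n) ^ k) x)) (g ((g ^ k) x))
        ≤ dist ((gseq n) (((gseq n) ^ k) x)) ((gseq n) ((g ^ k) x))
            + dist ((gseq n) ((g ^ k) x)) (g ((g ^ k) x)) := dist_triangle _ _ _
      _ = dist (((gseq n) ^ k) x) ((g ^ k) x)
            + dist ((gseq n) ((g ^ k) x)) (g ((g ^ k) x)) := by
          rw [(gseq n).isometry.dist_eq]

end Stmt6Aux

/-- Let `X` be a geodesic `δ`-hyperbolic metric space and `(g_n)` a
sequence of bijective isometries of `X` converging pointwise to a bijective isometry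
`g`. If `g` is hyperbolic, i.e. its asymptotic displacement length `L = |g|_∞`
(the limit of `d(gᵏy, y)/k`, independent of `y`) is positive, then `g_n` is hyperbolic
for all sufficiently large `n`. -/
theorem stmt_6 {X : Type*} [MetricSpace X] (δ : ℝ) (hδ : 0 ≤ δ)
    (hhyp : GromovHyperbolic X δ) (hgeo : GeodesicSpace X)
    (gseq : ℕ → X ≃ᵢ X) (g : X ≃ᵢ X)
    (hconv : ∀ x : X,
      Filter.Tendsto (fun n : ℕ => (gseq n) x) Filter.atTop (nhds (g x)))
    (L : ℝ) (hLpos : 0 < L)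
    (hlim : ∀ y : X,
      Filter.Tendsto (fun k : ℕ => dist ((g ^ k) y) y / k) Filter.atTop (nhds L)) :
    ∀ᶠ n in Filter.atTop, ∃ Ln : ℝ, 0 < Ln ∧ ∀ y : X,
      Filter.Tendsto (fun k : ℕ => dist (((gseq n) ^ k) y) y / k)
        Filter.atTop (nhds Ln) := by
  by_cases hX : Nonempty X
  swap
  · exact Filter.Eventually.of_forall fun n => ⟨L, hLpos, fun y => absurd ⟨y⟩ hX⟩
  obtain ⟨x₀⟩ := hX
  set a : ℕ → ℝ := fun k => dist ((g ^ k) x₀) x₀ with ha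
  have hL6 : 0 < L / 6 := by linarith
  obtain ⟨N, hN⟩ := Metric.tendsto_atTop.mp (hlim x₀) (L / 6) hL6
  set m : ℕ := max (N + 1) (⌈4 * δ / L⌉₊ + 1) with hm
  have hm1 : 1 ≤ m := le_trans (Nat.le_add_left 1 N) (le_max_left _ _)
  have hmN : N ≤ m := le_trans (Nat.le_succ N) (le_max_left _ _)
  have hmpos : (0 : ℝ) < m := by exact_mod_cast hm1
  have hmδ : 4 * δ < (m : ℝ) * L := by
    have h1 : 4 * δ / L ≤ (⌈4 * δ / L⌉₊ : ℝ) := Nat.le_ceil _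
    have h2 : ((⌈4 * δ / L⌉₊ + 1 : ℕ) : ℝ) ≤ (m : ℝ) := by
      exact_mod_cast le_max_right (N + 1) (⌈4 * δ / L⌉₊ + 1)
    have h3 : 4 * δ / L < (m : ℝ) := by push_cast at h2; linarith
    calc 4 * δ = 4 * δ / L * L := by field_simp
      _ < (m : ℝ) * L := mul_lt_mul_of_pos_right h3 hLpos
  -- bounds on a m and a (2m)
  have hbm := hN m hmN
  have hbm2 := hN (2 * m) (le_trans hmN (by omega))
  rw [Real.dist_eq, abs_lt] at hbm hbm2
  have ham : a m < (L + L / 6) * m := by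
    have := hbm.2
    have h' : a m / m < L + L / 6 := by linarith
    exact (div_lt_iff₀ hmpos).mp h'
  have ham2 : (L - L / 6) * (2 * (m : ℝ)) < a (2 * m) := by
    have := hbm2.1
    have h2m : (0 : ℝ) < ((2 * m : ℕ) : ℝ) := by push_cast; linarith
    have h' : L - L / 6 < a (2 * m) / ((2 * m : ℕ) : ℝ) := by linarith
    have := (lt_div_iff₀ h2m).mp h'
    push_cast at this
    linarith
  have hgap : 2 * δ < a (2 * m) - a m := by nlinarith
  -- transfer to gseq n for large n
  have hconv2 : Filter.Tendsto (fun n : ℕ => dist (((gseq n) ^ (2 * m)) x₀) x₀)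
      Filter.atTop (nhds (a (2 * m))) :=
    (aux_powconv gseq g hconv (2 * m) x₀).dist tendsto_const_nhds
  have hconv1 : Filter.Tendsto (fun n : ℕ => dist (((gseq n) ^ m) x₀) x₀)
      Filter.atTop (nhds (a m)) :=
    (aux_powconv gseq g hconv m x₀).dist tendsto_const_nhds
  have hev : ∀ᶠ n in Filter.atTop,
      2 * δ < dist (((gseq n) ^ (2 * m)) x₀) x₀ - dist (((gseq n) ^ m) x₀) x₀ :=
    (hconv2.sub hconv1).eventually (eventually_gt_nhds hgap)
  filter_upwards [hev] with n hn
  set h : X ≃ᵢ X := (gseq n) ^ m with hh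
  have hpow2 : h ^ 2 = (gseq n) ^ (2 * m) := by rw [hh, ← pow_mul, mul_comm]
  have hpow1 : h ^ 1 = (gseq n) ^ m := pow_one h
  have hcrit : dist ((h ^ 2) x₀) x₀ > dist ((h ^ 1) x₀) x₀ + 2 * δ := by
    rw [hpow2, hpow1]; linarith
  obtain ⟨l, hly⟩ := aux_limit (gseq n) x₀
  refine ⟨l, ?_, hly⟩
  set c : ℝ := dist ((h ^ 2) x₀) x₀ - dist ((h ^ 1) x₀) x₀ - 2 * δ with hc
  have hcpos : 0 < c := by rw [hc, hpow2, hpow1]; linarith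
  have hkey := aux_key hδ hhyp h x₀ hcrit
  -- the subsequence k = m * j shows l ≥ c / m > 0
  have hmono : Filter.Tendsto (fun j : ℕ => m * j) Filter.atTop Filter.atTop := by
    refine tendsto_atTop_mono (fun j => ?_) tendsto_id
    calc j = 1 * j := (one_mul j).symm
      _ ≤ m * j := Nat.mul_le_mul_right j hm1
  have hsub : Filter.Tendsto
      (fun j : ℕ => dist (((gseq n) ^ (m * j)) x₀) x₀ / ((m * j : ℕ) : ℝ))
      Filter.atTop (nhds l) := (hly x₀).comp hmono
  have hge : ∀ᶠ j in Filter.atTop,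
      c / m ≤ dist (((gseq n) ^ (m * j)) x₀) x₀ / ((m * j : ℕ) : ℝ) := by
    rw [Filter.eventually_atTop]
    refine ⟨1, fun j hj => ?_⟩
    have hjpos : (0 : ℝ) < j := by exact_mod_cast hj
    have hmj : (0 : ℝ) < ((m * j : ℕ) : ℝ) := by push_cast; positivity
    have hD : (j : ℝ) * c ≤ dist (((gseq n) ^ (m * j)) x₀) x₀ := by
      rw [show (gseq n) ^ (m * j) = h ^ j from by rw [hh, ← pow_mul], hc]
      exact hkey j
    rw [div_le_div_iff₀ hmpos hmj]
    push_cast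
    nlinarith [dist_nonneg (x := ((gseq n) ^ (m * j)) x₀) (y := x₀)]
  have hl : c / m ≤ l := ge_of_tendsto hsub hge
  exact lt_of_lt_of_le (div_pos hcpos hmpos) hl
end

section
/- Let X be a geodesic δ-hyperbolic metric space and let (g_n) be a sequence of bijective isometries of X converging pointwise to a bijective isometry g (that is, g_n(x) → g(x) for every x ∈ X). Then limsup_{n→∞} |g_n| ≤ |g| and limsup_{n→∞} |g_n|_∞ ≤ |g|_∞ + 16δ. -/
lemma aux_dist_pow_le {X : Type*} [MetricSpace X] (g : X ≃ᵢ X) (y : X) :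
    ∀ k : ℕ, dist ((g ^ k) y) y ≤ k * dist (g y) y
  | 0 => by simp
  | (k + 1) => by
    have e : (g ^ (k + 1)) y = (g ^ k) (g y) := by
      rw [pow_succ, IsometryEquiv.mul_apply]
    have ih := aux_dist_pow_le g y k
    calc dist ((g ^ (k + 1)) y) y
        ≤ dist ((g ^ (k + 1)) y) ((g ^ k) y) + dist ((g ^ k) y) y := dist_triangle _ _ _
      _ ≤ dist (g y) y + k * dist (g y) y := by
          rw [e, IsometryEquiv.dist_eq]; linarith
      _ = ((k : ℝ) + 1) * dist (g y) y := by ring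
      _ = ((k + 1 : ℕ) : ℝ) * dist (g y) y := by push_cast; ring

lemma aux_chain {X : Type*} [MetricSpace X] {δ : ℝ} (hδ : 0 ≤ δ)
    (hhyp : GromovHyperbolic X δ) (g : X ≃ᵢ X) (x : X)
    (hb : dist x (g x) + 2 * δ < dist x ((g ^ 2) x)) :
    ∀ n : ℕ, (n : ℝ) * (dist x ((g ^ 2) x) - dist x (g x) - 2 * δ) ≤ dist x ((g ^ n) x) := by
  have hg2 : (g ^ 2) x = g (g x) := by rw [sq, IsometryEquiv.mul_apply]
  have htri : dist x ((g ^ 2) x) ≤ 2 * dist x (g x) := by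
    calc dist x ((g ^ 2) x) ≤ dist x (g x) + dist (g x) ((g ^ 2) x) := dist_triangle _ _ _
      _ = 2 * dist x (g x) := by rw [hg2, IsometryEquiv.dist_eq]; ring
  have step : ∀ n : ℕ, dist x ((g ^ n) x) + (dist x ((g ^ 2) x) - dist x (g x) - 2 * δ)
      ≤ dist x ((g ^ (n + 1)) x) := by
    intro n
    induction n with
    | zero =>
        simp only [pow_zero, IsometryEquiv.coe_one, id_eq, dist_self, pow_one, zero_add]
        linarith
    | succ n ih =>
        have e1 : dist ((g ^ n) x) ((g ^ (n + 1)) x) = dist x (g x) := by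
          rw [pow_succ, IsometryEquiv.mul_apply, IsometryEquiv.dist_eq]
        have e2 : dist ((g ^ (n + 1 + 1)) x) ((g ^ (n + 1)) x) = dist x (g x) := by
          rw [pow_succ g (n + 1), IsometryEquiv.mul_apply, IsometryEquiv.dist_eq, dist_comm]
        have e3 : dist ((g ^ n) x) ((g ^ (n + 1 + 1)) x) = dist x ((g ^ 2) x) := by
          rw [show n + 1 + 1 = n + 2 from rfl, pow_add, IsometryEquiv.mul_apply,
            IsometryEquiv.dist_eq]
        have h := hhyp ((g ^ n) x) x ((g ^ (n + 1 + 1)) x) ((g ^ (n + 1)) x)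
        rw [e1, e2, e3, dist_comm ((g ^ n) x) x] at h
        rcases le_total ((dist x (g x) + dist x ((g ^ (n + 1)) x) - dist x ((g ^ n) x)) / 2)
            ((dist x ((g ^ (n + 1)) x) + dist x (g x) - dist x ((g ^ (n + 1 + 1)) x)) / 2)
          with hc | hc
        · rw [min_eq_left hc] at h; linarith
        · rw [min_eq_right hc] at h; linarith
  intro n
  induction n with
  | zero => simp
  | succ n ih =>
      have hs := step n
      push_cast
      push_cast at ih
      rw [add_mul, one_mul]
      linarith

lemma aux_midpoint {X : Type*} [MetricSpace X] {δ : ℝ} (hδ : 0 ≤ δ)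
    (hhyp : GromovHyperbolic X δ) (g : X ≃ᵢ X) (x m : X)
    (hm1 : dist x m = dist x (g x) / 2) (hm2 : dist m (g x) = dist x (g x) / 2) :
    dist (g m) m ≤ max 0 (dist x ((g ^ 2) x) - dist x (g x)) + 4 * δ := by
  have hg2 : (g ^ 2) x = g (g x) := by rw [sq, IsometryEquiv.mul_apply]
  have dgm1 : dist (g m) (g x) = dist x (g x) / 2 := by
    rw [IsometryEquiv.dist_eq, dist_comm]; exact hm1
  have dgm2 : dist (g m) ((g ^ 2) x) = dist x (g x) / 2 := by
    rw [hg2, IsometryEquiv.dist_eq]; exact hm2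
  have dgx2 : dist ((g ^ 2) x) (g x) = dist x (g x) := by
    rw [hg2, IsometryEquiv.dist_eq]; exact dist_comm _ _
  have h1 := hhyp m x (g m) (g x)
  have h2 := hhyp x ((g ^ 2) x) (g m) (g x)
  have hmaxl : (0 : ℝ) ≤ max 0 (dist x ((g ^ 2) x) - dist x (g x)) := le_max_left _ _
  have hmaxr : dist x ((g ^ 2) x) - dist x (g x) ≤ max 0 (dist x ((g ^ 2) x) - dist x (g x)) :=
    le_max_right _ _
  rcases le_total ((dist m (g x) + dist x (g x) - dist m x) / 2)
      ((dist x (g x) + dist (g m) (g x) - dist x (g m)) / 2) with hc1 | hc1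
  · rw [min_eq_left hc1] at h1
    linarith [hm1, hm2, dgm1, dist_comm m (g m), dist_comm x m]
  · rw [min_eq_right hc1] at h1
    rcases le_total ((dist x (g x) + dist ((g ^ 2) x) (g x) - dist x ((g ^ 2) x)) / 2)
        ((dist ((g ^ 2) x) (g x) + dist (g m) (g x) - dist ((g ^ 2) x) (g m)) / 2) with hc2 | hc2
    · rw [min_eq_left hc2] at h2
      linarith [hm1, hm2, dgm1, dgm2, dgx2, dist_comm m (g m), dist_comm x m,
        dist_comm ((g ^ 2) x) (g m)]
    · rw [min_eq_right hc2] at h2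
      linarith [hm1, hm2, dgm1, dgm2, dgx2, dist_comm m (g m), dist_comm x m,
        dist_comm ((g ^ 2) x) (g m)]

/-- Let `X` be a geodesic `δ`-hyperbolic metric space and `(g_n)` a
sequence of bijective isometries of `X` converging pointwise to a bijective isometry
`g`. Then `limsup |g_n| ≤ |g|` and `limsup |g_n|_∞ ≤ |g|_∞ + 16δ`, where
`|h| = inf_x d(hx, x)` is the displacement length and `|h|_∞` is the asymptotic
displacement length (the limit of `d(hᵏy, y)/k`, independent of the point `y`). -/
theorem stmt_7 {X : Type*} [MetricSpace X] [Nonempty X] (δ : ℝ) (hδ : 0 ≤ δ)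
    (hhyp : GromovHyperbolic X δ) (hgeo : GeodesicSpace X)
    (gseq : ℕ → X ≃ᵢ X) (g : X ≃ᵢ X)
    (hconv : ∀ x : X,
      Filter.Tendsto (fun n : ℕ => (gseq n) x) Filter.atTop (nhds (g x)))
    (Lseq : ℕ → ℝ)
    (hLseq : ∀ (n : ℕ) (y : X),
      Filter.Tendsto (fun k : ℕ => dist (((gseq n) ^ k) y) y / k)
        Filter.atTop (nhds (Lseq n)))
    (L : ℝ)
    (hL : ∀ y : X,
      Filter.Tendsto (fun k : ℕ => dist ((g ^ k) y) y / k) Filter.atTop (nhds L)) :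
    Filter.limsup (fun n : ℕ => ⨅ x : X, dist ((gseq n) x) x) Filter.atTop ≤
        ⨅ x : X, dist (g x) x ∧
      Filter.limsup Lseq Filter.atTop ≤ L + 16 * δ := by
  classical
  obtain ⟨x0⟩ := (inferInstance : Nonempty X)
  -- basic boundedness facts
  have hbdd : ∀ n : ℕ, BddBelow (Set.range fun x : X => dist ((gseq n) x) x) := by
    intro n
    exact ⟨0, by rintro _ ⟨x, rfl⟩; exact dist_nonneg⟩
  have hbddg : BddBelow (Set.range fun x : X => dist (g x) x) :=
    ⟨0, by rintro _ ⟨x, rfl⟩; exact dist_nonneg⟩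
  -- the infima sequence is nonneg
  have hinf_nonneg : ∀ n : ℕ, (0 : ℝ) ≤ ⨅ x : X, dist ((gseq n) x) x := by
    intro n
    exact le_ciInf fun x => dist_nonneg
  -- convergence of displacement at each point
  have hψ : ∀ x : X, Filter.Tendsto (fun n : ℕ => dist ((gseq n) x) x)
      Filter.atTop (nhds (dist (g x) x)) := by
    intro x
    exact (hconv x).dist tendsto_const_nhds
  -- Part 1
  have part1 : Filter.limsup (fun n : ℕ => ⨅ x : X, dist ((gseq n) x) x) Filter.atTop ≤
      ⨅ x : X, dist (g x) x := by
    apply le_ciInf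
    intro x
    have hle : (fun n : ℕ => ⨅ y : X, dist ((gseq n) y) y) ≤ᶠ[Filter.atTop]
        (fun n : ℕ => dist ((gseq n) x) x) :=
      Filter.Eventually.of_forall fun n => ciInf_le (hbdd n) x
    calc Filter.limsup (fun n : ℕ => ⨅ y : X, dist ((gseq n) y) y) Filter.atTop
        ≤ Filter.limsup (fun n : ℕ => dist ((gseq n) x) x) Filter.atTop :=
          Filter.limsup_le_limsup hle
            (Filter.isCoboundedUnder_le_of_le _ hinf_nonneg)
            (hψ x).isBoundedUnder_le
      _ = dist (g x) x := (hψ x).limsup_eq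
  refine ⟨part1, ?_⟩
  -- L ≥ 0
  have hL0 : 0 ≤ L :=
    ge_of_tendsto (hL x0)
      (Filter.Eventually.of_forall fun k => div_nonneg dist_nonneg (Nat.cast_nonneg k))
  -- Lseq n ≤ displacement of gseq n at every point
  have hLn_le : ∀ (n : ℕ) (x : X), Lseq n ≤ dist ((gseq n) x) x := by
    intro n x
    refine le_of_tendsto (hLseq n x) ?_
    rw [Filter.eventually_atTop]
    refine ⟨1, fun k hk => ?_⟩
    have hk0 : (0 : ℝ) < (k : ℝ) := by exact_mod_cast hk
    rw [div_le_iff₀ hk0]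
    have := aux_dist_pow_le (gseq n) x k
    linarith
  have hLn0 : ∀ n : ℕ, 0 ≤ Lseq n := by
    intro n
    exact ge_of_tendsto (hLseq n x0)
      (Filter.Eventually.of_forall fun k => div_nonneg dist_nonneg (Nat.cast_nonneg k))
  -- limsup Lseq ≤ dist (g x) x for every x
  have hlimsupLn : ∀ x : X, Filter.limsup Lseq Filter.atTop ≤ dist (g x) x := by
    intro x
    calc Filter.limsup Lseq Filter.atTop
        ≤ Filter.limsup (fun n : ℕ => dist ((gseq n) x) x) Filter.atTop :=
          Filter.limsup_le_limsup (Filter.Eventually.of_forall fun n => hLn_le n x)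
            (Filter.isCoboundedUnder_le_of_le _ hLn0)
            (hψ x).isBoundedUnder_le
      _ = dist (g x) x := (hψ x).limsup_eq
  have hlimsupI : Filter.limsup Lseq Filter.atTop ≤ ⨅ x : X, dist (g x) x :=
    le_ciInf hlimsupLn
  -- geometric part: ⨅ x, dist (g x) x ≤ L + 16 δ
  have hIle : ∀ y : X, (⨅ x : X, dist (g x) x) ≤ dist (g y) y := fun y => ciInf_le hbddg y
  -- midpoint of [x0, g x0]
  obtain ⟨f, hf0, hfa, hfiso⟩ := hgeo x0 (g x0)
  have ha0 : 0 ≤ dist x0 (g x0) := dist_nonneg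
  set m := f (dist x0 (g x0) / 2) with hmdef
  have hmem0 : (0 : ℝ) ∈ Set.Icc (0 : ℝ) (dist x0 (g x0)) := ⟨le_refl 0, ha0⟩
  have hmemh : dist x0 (g x0) / 2 ∈ Set.Icc (0 : ℝ) (dist x0 (g x0)) :=
    ⟨by linarith, by linarith⟩
  have hmema : dist x0 (g x0) ∈ Set.Icc (0 : ℝ) (dist x0 (g x0)) := ⟨ha0, le_refl _⟩
  have hm1 : dist x0 m = dist x0 (g x0) / 2 := by
    have h := hfiso 0 hmem0 (dist x0 (g x0) / 2) hmemh
    rw [hf0] at h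
    rw [hmdef, h, zero_sub, abs_neg, abs_of_nonneg (by linarith)]
  have hm2 : dist m (g x0) = dist x0 (g x0) / 2 := by
    have h := hfiso (dist x0 (g x0) / 2) hmemh (dist x0 (g x0)) hmema
    rw [hfa] at h
    rw [hmdef, h, abs_of_nonpos (by linarith)]
    ring
  have hmid := aux_midpoint hδ hhyp g x0 m hm1 hm2
  have hIL : (⨅ x : X, dist (g x) x) ≤ L + 16 * δ := by
    rcases le_or_gt (dist x0 ((g ^ 2) x0)) (dist x0 (g x0) + 2 * δ) with hb | hb
    · -- small case: displacement of midpoint is at most 6δ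
      have hmax : max 0 (dist x0 ((g ^ 2) x0) - dist x0 (g x0)) ≤ 2 * δ :=
        max_le (by linarith) (by linarith)
      have := hIle m
      linarith
    · -- chain case
      have hchain := aux_chain hδ hhyp g x0 hb
      have hLge : dist x0 ((g ^ 2) x0) - dist x0 (g x0) - 2 * δ ≤ L := by
        refine ge_of_tendsto (hL x0) ?_
        rw [Filter.eventually_atTop]
        refine ⟨1, fun k hk => ?_⟩
        have hk0 : (0 : ℝ) < (k : ℝ) := by exact_mod_cast hk
        rw [le_div_iff₀ hk0]
        have := hchain k
        rw [dist_comm ((g ^ k) x0) x0]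
        linarith
      have hmax : max 0 (dist x0 ((g ^ 2) x0) - dist x0 (g x0))
          = dist x0 ((g ^ 2) x0) - dist x0 (g x0) :=
        max_eq_right (by linarith)
      have := hIle m
      rw [hmax] at hmid
      linarith
  exact hlimsupI.trans hIL
end

section
/- Let X be a geodesic δ-hyperbolic metric space, let g be a bijective isometry of X which is not parabolic (i.e. g is elliptic or hyperbolic), and let x ∈ X. Then there is a constant C ≥ 0 such that | |g|_∞ · |n − m| − d(gⁿx, gᵐx) | ≤ C for all integers n, m ∈ ℤ. -/
section Aux
variable {X : Type*} [MetricSpace X]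

private lemma dist_pow_pow (g : X ≃ᵢ X) (x : X) (i j : ℕ) (h : i ≤ j) :
    dist ((g ^ i) x) ((g ^ j) x) = dist ((g ^ (j - i)) x) x := by
  have hj : g ^ j = g ^ i * g ^ (j - i) := by rw [← pow_add]; congr 1; omega
  rw [hj]
  have : (g ^ i * g ^ (j - i)) x = (g ^ i) ((g ^ (j - i)) x) := rfl
  rw [this, (g ^ i).dist_eq, dist_comm]

private lemma dist_subadd (g : X ≃ᵢ X) (x : X) (j k : ℕ) :
    dist ((g ^ (j + k)) x) x ≤ dist ((g ^ j) x) x + dist ((g ^ k) x) x := by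
  have h1 : dist ((g ^ k) x) ((g ^ (j + k)) x) = dist ((g ^ j) x) x := by
    rw [dist_pow_pow g x k (j + k) (by omega), Nat.add_sub_cancel]
  calc dist ((g ^ (j + k)) x) x ≤ dist ((g ^ (j + k)) x) ((g ^ k) x) + dist ((g ^ k) x) x :=
        dist_triangle _ _ _
    _ ≤ dist ((g ^ j) x) x + dist ((g ^ k) x) x := by
        rw [dist_comm ((g ^ (j+k)) x), h1]

private lemma dist_pow_zero (g : X ≃ᵢ X) (x : X) : dist ((g ^ 0) x) x = 0 := by
  simp

private lemma dyy (g : X ≃ᵢ X) (x : X) (N i j : ℕ) (h : i ≤ j) :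
    dist ((g ^ (i*N)) x) ((g ^ (j*N)) x) = dist ((g ^ ((j-i)*N)) x) x := by
  rw [dist_pow_pow g x (i*N) (j*N) (Nat.mul_le_mul_right N h), ← Nat.sub_mul]

private lemma dist_zpow_natAbs (g : X ≃ᵢ X) (x : X) (n m : ℤ) :
    dist ((g ^ n) x) ((g ^ m) x) = dist ((g ^ (n - m).natAbs) x) x := by
  have step1 : dist ((g ^ n) x) ((g ^ m) x) = dist ((g ^ (n - m)) x) x := by
    have e1 : (g ^ (-m)) ((g ^ n) x) = (g ^ (n - m)) x := by
      have : g ^ (n - m) = g ^ (-m) * g ^ n := by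
        rw [← zpow_add]; congr 1; ring
      rw [this]; rfl
    have e2 : (g ^ (-m)) ((g ^ m) x) = x := by
      have : (g ^ (-m)) ((g ^ m) x) = (g ^ (-m) * g ^ m) x := rfl
      rw [this, ← zpow_add]; norm_num
    rw [← (g ^ (-m)).dist_eq, e1, e2]
  rw [step1]
  set k := (n - m).natAbs with hk
  rcases Int.natAbs_eq (n - m) with h | h
  · rw [h, zpow_natCast]
  · rw [h]
    have e3 : g ^ (-(k : ℤ)) = (g ^ k)⁻¹ := by
      rw [zpow_neg, zpow_natCast]
    rw [e3]
    have e4 : dist ((g ^ k) ((g ^ k)⁻¹ x)) ((g ^ k) x)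
        = dist ((g ^ k)⁻¹ x) x := (g ^ k).dist_eq _ _
    have e5 : (g ^ k) ((g ^ k)⁻¹ x) = x := by
      have : (g ^ k) ((g ^ k)⁻¹ x) = (g ^ k * (g ^ k)⁻¹) x := rfl
      rw [this, mul_inv_cancel]; rfl
    rw [← e4, e5, dist_comm]

open Filter in
private lemma tendsto_mul_right (N : ℕ) (hN : 1 ≤ N) :
    Tendsto (fun k : ℕ => k * N) atTop atTop := by
  apply tendsto_atTop_atTop.2
  intro b
  exact ⟨b, fun m hm => le_trans hm (le_trans (by omega : m ≤ m * 1) (Nat.mul_le_mul_left m hN))⟩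

open Filter in
private lemma seq_lower (u : ℕ → ℝ) (L : ℝ) (hz : u 0 = 0)
    (hlim : Tendsto (fun k : ℕ => u k / k) atTop (nhds L))
    (hsub : ∀ j k : ℕ, u (j + k) ≤ u j + u k) :
    ∀ k : ℕ, 1 ≤ k → L * k ≤ u k := by
  intro k hk
  have hk' : (0:ℝ) < k := by exact_mod_cast hk
  have hmul : ∀ m : ℕ, u (m * k) ≤ m * u k := by
    intro m
    induction m with
    | zero => simp [hz]
    | succ m ih =>
        have h1 : u (m * k + k) ≤ u (m * k) + u k := hsub (m*k) k
        have e : (m + 1) * k = m * k + k := by ring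
        rw [e]
        push_cast
        linarith
  have hcomp : Tendsto (fun m : ℕ => u (m * k) / ((m * k : ℕ) : ℝ)) atTop (nhds L) :=
    hlim.comp (tendsto_mul_right k hk)
  have hbound : ∀ᶠ m : ℕ in atTop, u (m * k) / ((m * k : ℕ) : ℝ) ≤ u k / k := by
    filter_upwards [eventually_ge_atTop 1] with m hm
    have hm' : (0:ℝ) < m := by exact_mod_cast hm
    have hmk : (0:ℝ) < ((m * k : ℕ) : ℝ) := by positivity
    rw [div_le_div_iff₀ hmk hk']
    push_cast
    push_cast at hmul
    nlinarith [hmul m]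
  have : L ≤ u k / k := le_of_tendsto hcomp hbound
  rw [le_div_iff₀ hk'] at this
  linarith

open Filter in
private lemma seq_upper (u : ℕ → ℝ) (L K : ℝ) (hK : 0 ≤ K) (hz : u 0 = 0)
    (hlim : Tendsto (fun k : ℕ => u k / k) atTop (nhds L))
    (hsuper : ∀ j k : ℕ, u j + u k - K ≤ u (j + k)) :
    ∀ k : ℕ, u k ≤ L * k + K := by
  intro k
  rcases Nat.eq_zero_or_pos k with rfl | hk
  · simp [hz]; positivity
  have hk' : (0:ℝ) < k := by exact_mod_cast hk
  have hmul : ∀ m : ℕ, (m : ℝ) * (u k - K) ≤ u (m * k) := by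
    intro m
    induction m with
    | zero => simp [hz]
    | succ m ih =>
        have h1 : u (m * k) + u k - K ≤ u (m * k + k) := hsuper (m*k) k
        have e : (m + 1) * k = m * k + k := by ring
        rw [e]
        push_cast
        linarith
  have hcomp : Tendsto (fun m : ℕ => u (m * k) / ((m * k : ℕ) : ℝ)) atTop (nhds L) :=
    hlim.comp (tendsto_mul_right k hk)
  have hbound : ∀ᶠ m : ℕ in atTop, (u k - K) / k ≤ u (m * k) / ((m * k : ℕ) : ℝ) := by
    filter_upwards [eventually_ge_atTop 1] with m hm
    have hm' : (0:ℝ) < m := by exact_mod_cast hm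
    have hmk : (0:ℝ) < ((m * k : ℕ) : ℝ) := by positivity
    rw [div_le_div_iff₀ hk' hmk]
    push_cast
    nlinarith [hmul m]
  have : (u k - K) / k ≤ L := ge_of_tendsto hcomp hbound
  rw [div_le_iff₀ hk'] at this
  linarith

private lemma chain (δ : ℝ) (hδ : 0 ≤ δ) (hhyp : GromovHyperbolic X δ)
    (g : X ≃ᵢ X) (x : X) (N : ℕ)
    (hgap : 3*δ < dist ((g^(2*N)) x) x - dist ((g^N) x) x) :
    ∀ m : ℕ, 1 ≤ m →
      (dist ((g^(m*N)) x) x + dist ((g^N) x) x - dist ((g^((m+1)*N)) x) x) / 2 ≤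
      (dist ((g^N) x) x + dist ((g^N) x) x - dist ((g^(2*N)) x) x) / 2 + δ := by
  intro m hm
  induction m, hm using Nat.le_induction with
  | base =>
      rw [one_mul]
      norm_num
      linarith
  | succ m hm ih =>
      have key := hhyp ((g^(m*N)) x) x ((g^((m+2)*N)) x) ((g^((m+1)*N)) x)
      have d1 : dist ((g^(m*N)) x) ((g^((m+1)*N)) x) = dist ((g^N) x) x := by
        rw [dyy g x N m (m+1) (by omega)]
        have : m + 1 - m = 1 := by omega
        rw [this, one_mul]
      have d2 : dist ((g^((m+2)*N)) x) ((g^((m+1)*N)) x) = dist ((g^N) x) x := by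
        rw [dist_comm, dyy g x N (m+1) (m+2) (by omega)]
        have : m + 2 - (m+1) = 1 := by omega
        rw [this, one_mul]
      have d3 : dist ((g^(m*N)) x) ((g^((m+2)*N)) x) = dist ((g^(2*N)) x) x := by
        rw [dyy g x N m (m+2) (by omega)]
        have : m + 2 - m = 2 := by omega
        rw [this]
      have d4 : dist x ((g^((m+1)*N)) x) = dist ((g^((m+1)*N)) x) x := dist_comm _ _
      have d5 : dist ((g^(m*N)) x) x = dist ((g^(m*N)) x) x := rfl
      have d6 : dist x ((g^((m+2)*N)) x) = dist ((g^((m+2)*N)) x) x := dist_comm _ _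
      rw [d1, d2, d3, d4, d6] at key
      have e1 : m + 1 + 1 = m + 2 := by omega
      rw [e1]
      rcases min_cases ((dist ((g^(m*N)) x) ((g^((m+1)*N)) x) + dist ((g^((m+1)*N)) x) x -
          dist ((g^(m*N)) x) x) / 2)
        ((dist ((g^((m+1)*N)) x) x + dist ((g^N) x) x - dist ((g^((m+2)*N)) x) x) / 2) with
        ⟨heq, _⟩ | ⟨heq, _⟩ <;> rw [d1] at heq <;> rw [heq] at key <;> linarith

private lemma superadd (δ : ℝ) (hδ : 0 ≤ δ) (hhyp : GromovHyperbolic X δ)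
    (g : X ≃ᵢ X) (x : X) (N : ℕ)
    (hgap : 3*δ < dist ((g^(2*N)) x) x - dist ((g^N) x) x) :
    ∀ j k : ℕ, 1 ≤ j → 1 ≤ k →
      dist ((g^(j*N)) x) x + dist ((g^(k*N)) x) x
        ≤ dist ((g^((j+k)*N)) x) x + (2 * dist ((g^N) x) x - dist ((g^(2*N)) x) x + 4*δ) := by
  intro j k hj hk
  rcases Nat.lt_or_ge k 2 with hk2 | hk2
  · -- k = 1
    have hk1 : k = 1 := by omega
    subst hk1
    have hc := chain δ hδ hhyp g x N hgap j hj
    rw [one_mul]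
    linarith
  · -- k ≥ 2
    have hcj := chain δ hδ hhyp g x N hgap j hj
    have hck := chain δ hδ hhyp g x N hgap (k-1) (by omega)
    have ek : k - 1 + 1 = k := by omega
    rw [ek] at hck
    have key := hhyp x ((g^((j+k)*N)) x) ((g^((j+1)*N)) x) ((g^(j*N)) x)
    have d1 : dist x ((g^(j*N)) x) = dist ((g^(j*N)) x) x := dist_comm _ _
    have d2 : dist ((g^((j+1)*N)) x) ((g^(j*N)) x) = dist ((g^N) x) x := by
      rw [dist_comm, dyy g x N j (j+1) (by omega)]
      have : j + 1 - j = 1 := by omega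
      rw [this, one_mul]
    have d3 : dist x ((g^((j+1)*N)) x) = dist ((g^((j+1)*N)) x) x := dist_comm _ _
    have d4 : dist ((g^((j+k)*N)) x) ((g^(j*N)) x) = dist ((g^(k*N)) x) x := by
      rw [dist_comm, dyy g x N j (j+k) (by omega)]
      have : j + k - j = k := by omega
      rw [this]
    have d5 : dist x ((g^((j+k)*N)) x) = dist ((g^((j+k)*N)) x) x := dist_comm _ _
    have d6 : dist ((g^((j+k)*N)) x) ((g^((j+1)*N)) x) = dist ((g^((k-1)*N)) x) x := by
      rw [dist_comm, dyy g x N (j+1) (j+k) (by omega)]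
      have : j + k - (j+1) = k - 1 := by omega
      rw [this]
    rw [d1, d2, d3, d4, d5, d6] at key
    rcases min_cases ((dist ((g^(j*N)) x) x + dist ((g^(k*N)) x) x -
        dist ((g^((j+k)*N)) x) x) / 2)
      ((dist ((g^(k*N)) x) x + dist ((g^N) x) x - dist ((g^((k-1)*N)) x) x) / 2) with
      ⟨heq, _⟩ | ⟨heq, _⟩ <;> rw [heq] at key <;> linarith

end Aux

open Filter in
/-- Let `X` be a geodesic `δ`-hyperbolic metric space and `g` a
bijective isometry of `X` which is not parabolic, i.e. `g` is elliptic (some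
`⟨g⟩`-orbit is bounded) or hyperbolic (its asymptotic displacement length
`L = |g|_∞`, the limit of `d(gᵏy, y)/k` independent of `y`, is positive).
Then for every `x ∈ X` the difference `|g|_∞·|n − m| − d(gⁿx, gᵐx)` remains bounded
over `n, m ∈ ℤ`. -/
theorem stmt_8 {X : Type*} [MetricSpace X] (δ : ℝ) (hδ : 0 ≤ δ)
    (hhyp : GromovHyperbolic X δ) (hgeo : GeodesicSpace X)
    (g : X ≃ᵢ X) (L : ℝ)
    (hlim : ∀ y : X,
      Filter.Tendsto (fun k : ℕ => dist ((g ^ k) y) y / k) Filter.atTop (nhds L))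
    (hnotpar : (∃ x₀ : X, ∃ M : ℝ, ∀ n : ℤ, dist ((g ^ n) x₀) x₀ ≤ M) ∨ 0 < L)
    (x : X) :
    ∃ C : ℝ, 0 ≤ C ∧ ∀ n m : ℤ,
      |L * |(n : ℝ) - (m : ℝ)| - dist ((g ^ n) x) ((g ^ m) x)| ≤ C := by
  have hz : dist ((g ^ (0:ℕ)) x) x = 0 := dist_pow_zero g x
  suffices h : ∃ C : ℝ, 0 ≤ C ∧ ∀ p : ℕ, |L * p - dist ((g ^ p) x) x| ≤ C by
    obtain ⟨C, hC0, hC⟩ := h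
    refine ⟨C, hC0, fun n m => ?_⟩
    have e1 : dist ((g ^ n) x) ((g ^ m) x) = dist ((g ^ (n - m).natAbs) x) x :=
      dist_zpow_natAbs g x n m
    have e2 : |(n : ℝ) - (m : ℝ)| = ((n - m).natAbs : ℝ) := by
      rw [Nat.cast_natAbs]
      push_cast
      ring_nf
    rw [e1, e2]
    exact hC _
  rcases hnotpar with ⟨x₀, M, hM⟩ | hL
  · -- elliptic case
    set B : ℝ := M + 2 * dist x x₀ with hB
    have hMx : ∀ p : ℕ, dist ((g ^ p) x) x ≤ B := by
      intro p
      have h4 : dist ((g ^ p) x) x ≤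
          dist ((g ^ p) x) ((g ^ p) x₀) + dist ((g ^ p) x₀) x₀ + dist x₀ x :=
        dist_triangle4 _ _ _ _
      have e1 : dist ((g ^ p) x) ((g ^ p) x₀) = dist x x₀ := (g ^ p).dist_eq x x₀
      have e2 : dist ((g ^ p) x₀) x₀ ≤ M := by
        have := hM (p : ℤ)
        rwa [zpow_natCast] at this
      rw [e1] at h4
      rw [hB]
      have : dist x₀ x = dist x x₀ := dist_comm _ _
      linarith
    have hB0 : 0 ≤ B := le_trans dist_nonneg (hMx 0)
    have hL0 : L = 0 := by
      have h0 : Tendsto (fun k : ℕ => dist ((g ^ k) x) x / k) atTop (nhds 0) := by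
        apply squeeze_zero' (f := fun k : ℕ => dist ((g ^ k) x) x / k)
          (g := fun k : ℕ => B / k)
        · filter_upwards with k
          positivity
        · filter_upwards [eventually_ge_atTop 1] with k hk
          have hk' : (0:ℝ) < k := by exact_mod_cast hk
          gcongr
          exact hMx k
        · exact tendsto_const_div_atTop_nhds_zero_nat B
      exact tendsto_nhds_unique (hlim x) h0
    refine ⟨B, hB0, fun p => ?_⟩
    rw [hL0, zero_mul, zero_sub, abs_neg, abs_of_nonneg dist_nonneg]
    exact hMx p
  · -- hyperbolic case
    have hsub := dist_subadd g x
    have hlow : ∀ k : ℕ, 1 ≤ k → L * k ≤ dist ((g ^ k) x) x :=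
      seq_lower _ L hz (hlim x) hsub
    -- find a good N
    have hev1 : ∀ᶠ k : ℕ in atTop, dist ((g ^ k) x) x / k < L + L/2 :=
      (hlim x).eventually (eventually_lt_nhds (by linarith))
    have hev2 : ∀ᶠ k : ℕ in atTop, 6*δ/L < (k:ℝ) := by
      filter_upwards [eventually_ge_atTop (⌈6*δ/L⌉₊ + 1)] with k hk
      have h1 : 6*δ/L ≤ (⌈6*δ/L⌉₊ : ℝ) := Nat.le_ceil _
      have h2 : ((⌈6*δ/L⌉₊ + 1 : ℕ) : ℝ) ≤ (k : ℝ) := by exact_mod_cast hk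
      push_cast at h2
      linarith
    obtain ⟨N, hN⟩ := ((hev1.and hev2).and (eventually_ge_atTop 1)).exists
    obtain ⟨⟨hNlt, hNδ⟩, hN1⟩ := hN
    have hN0 : (0:ℝ) < N := by exact_mod_cast hN1
    have haN : dist ((g ^ N) x) x < (L + L/2) * N := by
      rw [div_lt_iff₀ hN0] at hNlt
      exact hNlt
    have h6δ : 6*δ < (N:ℝ) * L := by
      rw [div_lt_iff₀ hL] at hNδ
      linarith
    have hgap : 3*δ < dist ((g^(2*N)) x) x - dist ((g^N) x) x := by
      have h2N : L * ((2*N : ℕ) : ℝ) ≤ dist ((g ^ (2*N)) x) x := hlow (2*N) (by omega)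
      push_cast at h2N
      nlinarith
    have hsup := superadd δ hδ hhyp g x N hgap
    set K : ℝ := 2 * dist ((g^N) x) x - dist ((g^(2*N)) x) x + 4*δ with hK
    have hK0 : 0 ≤ K := by
      have h1 : dist ((g ^ (N + N)) x) x ≤ dist ((g^N) x) x + dist ((g^N) x) x := hsub N N
      have e : 2*N = N + N := two_mul N
      rw [hK, e]
      linarith
    set u : ℕ → ℝ := fun k => dist ((g ^ (k*N)) x) x with hu
    have hu0 : u 0 = 0 := by
      rw [hu]
      simp only [zero_mul]
      exact hz
    have hulim : Tendsto (fun k : ℕ => u k / k) atTop (nhds ((N:ℝ)*L)) := by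
      have hcomp : Tendsto (fun k : ℕ => dist ((g ^ (k*N)) x) x / ((k*N : ℕ) : ℝ)) atTop
          (nhds L) := (hlim x).comp (tendsto_mul_right N hN1)
      refine Filter.Tendsto.congr' ?_ (hcomp.const_mul (N:ℝ))
      filter_upwards [eventually_ge_atTop 1] with k hk
      have hk' : (0:ℝ) < k := by exact_mod_cast hk
      show (N:ℝ) * (dist ((g ^ (k*N)) x) x / ((k*N : ℕ) : ℝ)) = u k / k
      rw [hu]
      push_cast
      field_simp
    have hsuper' : ∀ j k : ℕ, u j + u k - K ≤ u (j + k) := by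
      intro j k
      rcases Nat.eq_zero_or_pos j with rfl | hj
      · simp only [hu0, Nat.zero_add, zero_add]
        linarith
      rcases Nat.eq_zero_or_pos k with rfl | hk
      · simp only [hu0, Nat.add_zero, add_zero]
        linarith
      have := hsup j k hj hk
      rw [hu]
      simp only []
      linarith
    have hupper : ∀ k : ℕ, u k ≤ (N:ℝ)*L*k + K := seq_upper u _ K hK0 hu0 hulim hsuper'
    set B : ℝ := ∑ r ∈ Finset.range N, dist ((g ^ r) x) x with hBdef
    have hBr : ∀ r : ℕ, r < N → dist ((g ^ r) x) x ≤ B := fun r hr =>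
      Finset.single_le_sum (f := fun i => dist ((g ^ i) x) x) (fun i _ => dist_nonneg)
        (Finset.mem_range.2 hr)
    have hB0 : 0 ≤ B := Finset.sum_nonneg fun i _ => dist_nonneg
    refine ⟨K + B, by linarith, fun p => ?_⟩
    have h1 : L * p ≤ dist ((g ^ p) x) x := by
      rcases Nat.eq_zero_or_pos p with rfl | hp
      · simp [hz]
      · exact hlow p hp
    have hdecomp : p = N * (p/N) + p % N := (Nat.div_add_mod p N).symm
    have h2 : dist ((g ^ p) x) x ≤ u (p/N) + dist ((g ^ (p % N)) x) x := by
      have := hsub (N * (p/N)) (p % N)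
      rw [← hdecomp] at this
      rw [hu]
      simp only []
      rw [mul_comm (p/N) N]
      exact this
    have h3 : u (p/N) ≤ (N:ℝ)*L*(p/N : ℕ) + K := hupper _
    have h4 : (N:ℝ)*L*((p/N : ℕ) : ℝ) ≤ L * p := by
      have hle : ((p/N * N : ℕ) : ℝ) ≤ (p : ℝ) := by exact_mod_cast Nat.div_mul_le_self p N
      push_cast at hle
      nlinarith [le_of_lt hL]
    have h5 : dist ((g ^ (p % N)) x) x ≤ B := hBr _ (Nat.mod_lt p (by omega))
    rw [abs_le]
    constructor
    · linarith
    · linarith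
end

section
/- Let δ ≥ 0. There exist constants H, J depending only on δ with the following property. Let X be a geodesic δ-hyperbolic metric space, let ℓ : ℝ → X be a geodesic line, and let P : X → ℓ(ℝ) be a nearest-point projection onto ℓ, i.e. d(x, P(x)) = inf_{z∈ℓ(ℝ)} d(x, z) for all x ∈ X. If x, y ∈ X satisfy d(P(x), P(y)) ≥ J, then for any choice of geodesic segments [x, P(x)], [P(x), P(y)], [P(y), y] and any geodesic segment [x, y], every point of the union [x, P(x)] ∪ [P(x), P(y)] ∪ [P(y), y] lies at distance less than H from the segment [x, y]. -/
/-- `f` is a geodesic segment from `a` to `b`: `f 0 = a`, `f (dist a b) = b`, and `f`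
is isometric on `[0, dist a b]`. -/
def IsGeodSeg {X : Type*} [MetricSpace X] (f : ℝ → X) (a b : X) : Prop :=
  f 0 = a ∧ f (dist a b) = b ∧
    ∀ s ∈ Set.Icc (0 : ℝ) (dist a b), ∀ t ∈ Set.Icc (0 : ℝ) (dist a b),
      dist (f s) (f t) = |s - t|

universe u

lemma exists_between_real (s₀ s₁ a : ℝ) (h0 : 0 ≤ a) (h1 : a ≤ |s₁ - s₀|) :
    ∃ u : ℝ, |u - s₀| = a ∧ |s₁ - u| = |s₁ - s₀| - a := by
  rcases le_total s₀ s₁ with h | h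
  · rw [abs_of_nonneg (by linarith)] at h1 ⊢
    exact ⟨s₀ + a, by rw [abs_of_nonneg (by linarith)]; ring,
      by rw [abs_of_nonneg (by linarith)]; ring⟩
  · rw [abs_of_nonpos (by linarith)] at h1 ⊢
    exact ⟨s₀ - a, by rw [abs_of_nonpos (by linarith)]; ring,
      by rw [abs_of_nonpos (by linarith)]; ring⟩

/-- distances along a geodesic segment: `dist a (f s) = s`. -/
lemma IsGeodSeg.dist_left {X : Type*} [MetricSpace X] {f : ℝ → X} {a b : X}
    (h : IsGeodSeg f a b) {s : ℝ} (hs : s ∈ Set.Icc (0 : ℝ) (dist a b)) :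
    dist a (f s) = s := by
  have := h.2.2 0 ⟨le_refl 0, dist_nonneg⟩ s hs
  rw [h.1] at this
  rw [this, abs_of_nonpos (by linarith [hs.1])]
  ring

/-- distances along a geodesic segment: `dist (f s) b = dist a b - s`. -/
lemma IsGeodSeg.dist_right {X : Type*} [MetricSpace X] {f : ℝ → X} {a b : X}
    (h : IsGeodSeg f a b) {s : ℝ} (hs : s ∈ Set.Icc (0 : ℝ) (dist a b)) :
    dist (f s) b = dist a b - s := by
  have := h.2.2 s hs (dist a b) ⟨dist_nonneg, le_refl _⟩
  rw [h.2.1] at this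
  rw [this, abs_of_nonpos (by linarith [hs.2])]
  ring

/-- For every `δ ≥ 0` there are constants `H, J` depending only on `δ`
with the following property. Let `X` be a geodesic `δ`-hyperbolic metric space,
`ℓ : ℝ → X` a geodesic line and `P` a nearest-point projection onto `ℓ(ℝ)`. If
`d(P x, P y) ≥ J`, then for any geodesic segments `[x, Px]`, `[Px, Py]`, `[Py, y]` and
any geodesic segment `[x, y]`, every point of `[x, Px] ∪ [Px, Py] ∪ [Py, y]` lies at
distance less than `H` from `[x, y]`. -/
theorem stmt_9 (δ : ℝ) (hδ : 0 ≤ δ) :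
    ∃ H J : ℝ, ∀ (X : Type u) [MetricSpace X],
      GromovHyperbolic X δ → GeodesicSpace X →
      ∀ ℓ : ℝ → X, Isometry ℓ →
      ∀ P : X → X, (∀ z : X, P z ∈ Set.range ℓ) →
        (∀ z : X, dist z (P z) = ⨅ t : ℝ, dist z (ℓ t)) →
      ∀ x y : X, J ≤ dist (P x) (P y) →
      ∀ f₁ f₂ f₃ fxy : ℝ → X,
        IsGeodSeg f₁ x (P x) → IsGeodSeg f₂ (P x) (P y) → IsGeodSeg f₃ (P y) y →
        IsGeodSeg fxy x y →
      ∀ p ∈ f₁ '' Set.Icc 0 (dist x (P x)) ∪ f₂ '' Set.Icc 0 (dist (P x) (P y))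
            ∪ f₃ '' Set.Icc 0 (dist (P y) y),
        ∃ q ∈ fxy '' Set.Icc 0 (dist x y), dist p q < H := by
  refine ⟨12 * δ + 1, 5 * δ + 1, ?_⟩
  intro X _ hX _hgeo ℓ hℓ P hrange hinf x y hJ f₁ f₂ f₃ fxy h₁ h₂ h₃ hxy p hp
  -- `P w` is a nearest point on the line
  have hproj : ∀ w : X, ∀ z ∈ Set.range ℓ, dist w (P w) ≤ dist w z := by
    rintro w _ ⟨t, rfl⟩
    rw [hinf w]
    exact ciInf_le ⟨0, by rintro _ ⟨t, rfl⟩; exact dist_nonneg⟩ t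
  -- Projection lemma: the broken path w → P w → z is 4δ-taut for z on the line
  have hP1 : ∀ w : X, ∀ z ∈ Set.range ℓ, dist w (P w) + dist (P w) z ≤ dist w z + 4 * δ := by
    intro w z hz
    obtain ⟨s₀, hs₀⟩ := hrange w
    obtain ⟨s₁, hs₁⟩ := hz
    set a : ℝ := (dist w (P w) + dist (P w) z - dist w z) / 2 with ha
    have ha0 : 0 ≤ a := by
      have := dist_triangle w (P w) z
      simp only [ha]; linarith
    have hwz : dist w (P w) ≤ dist w z := hproj w z ⟨s₁, hs₁⟩
    have haD : a ≤ dist (P w) z := by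
      have := dist_nonneg (x := P w) (y := z); simp only [ha]; linarith
    have hD : dist (P w) z = |s₁ - s₀| := by
      rw [← hs₀, ← hs₁, hℓ.dist_eq, Real.dist_eq, abs_sub_comm]
    obtain ⟨u, hu1, hu2⟩ := exists_between_real s₀ s₁ a ha0 (by rw [← hD]; exact haD)
    have hdPw : dist (P w) (ℓ u) = a := by
      rw [← hs₀, hℓ.dist_eq, Real.dist_eq, abs_sub_comm, hu1]
    have hdzw : dist z (ℓ u) = dist (P w) z - a := by
      rw [hD, ← hs₁, hℓ.dist_eq, Real.dist_eq, hu2]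
    have hle : dist w (P w) ≤ dist w (ℓ u) := hproj w (ℓ u) ⟨u, rfl⟩
    have hyp := hX w z (ℓ u) (P w)
    have c1 : dist (ℓ u) (P w) = a := by rw [dist_comm]; exact hdPw
    have c2 : dist z (P w) = dist (P w) z := dist_comm z (P w)
    have c3 : dist z (ℓ u) = dist (P w) z - a := hdzw
    rcases le_total ((dist w (P w) + dist z (P w) - dist w z) / 2)
        ((dist z (P w) + dist (ℓ u) (P w) - dist z (ℓ u)) / 2) with h | h
    · rw [min_eq_left h] at hyp; simp only [ha] at *; linarith
    · rw [min_eq_right h] at hyp; simp only [ha] at *; linarith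
  -- tautness of the broken path x → Px → Py → y
  have h1 := hP1 x (P y) (hrange y)
  have h2 := hP1 y (P x) (hrange x)
  have hgp : dist x (P x) + dist y (P x) - dist x y ≤ 6 * δ := by
    have hyp := hX x y (P y) (P x)
    have c1 : dist (P y) (P x) = dist (P x) (P y) := dist_comm _ _
    have c2 : dist y (P x) = dist (P x) y := dist_comm _ _
    have c3 : dist x (P y) = dist (P y) x := dist_comm _ _
    have c4 : dist y (P y) = dist (P y) y := dist_comm _ _
    rcases le_total ((dist x (P x) + dist y (P x) - dist x y) / 2)
        ((dist y (P x) + dist (P y) (P x) - dist y (P y)) / 2) with h | h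
    · rw [min_eq_left h] at hyp; linarith
    · rw [min_eq_right h] at hyp; linarith
  have htaut : dist x (P x) + dist (P x) (P y) + dist (P y) y ≤ dist x y + 10 * δ := by
    have c2 : dist y (P x) = dist (P x) y := dist_comm _ _
    have c4 : dist y (P y) = dist (P y) y := dist_comm _ _
    have c5 : dist (P y) (P x) = dist (P x) (P y) := dist_comm _ _
    linarith
  -- every point p of the broken path satisfies d(x,p)+d(p,y) ≤ d(x,y) + 10δ
  have hpx : dist x p + dist p y ≤ dist x y + 10 * δ := by
    rcases hp with (hp | hp) | hp
    · obtain ⟨s, hs, rfl⟩ := hp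
      have e1 := h₁.dist_left hs
      have e2 := h₁.dist_right hs
      have t1 := dist_triangle (f₁ s) (P x) y
      have t2 := dist_triangle (P x) (P y) y
      linarith
    · obtain ⟨s, hs, rfl⟩ := hp
      have e1 := h₂.dist_left hs
      have e2 := h₂.dist_right hs
      have t1 := dist_triangle x (P x) (f₂ s)
      have t2 := dist_triangle (f₂ s) (P y) y
      have c1 : dist (P x) (f₂ s) = dist (f₂ s) (P x) := dist_comm _ _
      linarith
    · obtain ⟨s, hs, rfl⟩ := hp
      have e1 := h₃.dist_left hs
      have e2 := h₃.dist_right hs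
      have t1 := dist_triangle x (P x) (P y)
      have t2 := dist_triangle x (P y) (f₃ s)
      have c1 : dist (P y) (f₃ s) = dist (f₃ s) (P y) := dist_comm _ _
      linarith
  -- hence p is within 12δ of the geodesic [x, y]
  rcases le_total (dist x p) (dist x y) with hc | hc
  · refine ⟨fxy (dist x p), ⟨dist x p, ⟨dist_nonneg, hc⟩, rfl⟩, ?_⟩
    have e1 := hxy.dist_left (s := dist x p) ⟨dist_nonneg, hc⟩
    have e2 := hxy.dist_right (s := dist x p) ⟨dist_nonneg, hc⟩
    have hyp := hX x p y (fxy (dist x p))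
    have c1 : dist x (fxy (dist x p)) = dist x p := e1
    have c2 : dist y (fxy (dist x p)) = dist x y - dist x p := by
      rw [dist_comm]; exact e2
    have c3 : dist p (fxy (dist x p)) = dist (fxy (dist x p)) p := dist_comm _ _
    rcases le_total ((dist x (fxy (dist x p)) + dist p (fxy (dist x p)) - dist x p) / 2)
        ((dist p (fxy (dist x p)) + dist y (fxy (dist x p)) - dist p y) / 2) with h | h
    · rw [min_eq_left h] at hyp
      have : dist p (fxy (dist x p)) ≤ 2 * δ := by linarith
      linarith
    · rw [min_eq_right h] at hyp
      have : dist p (fxy (dist x p)) ≤ 12 * δ := by linarith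
      linarith
  · refine ⟨fxy (dist x y), ⟨dist x y, ⟨dist_nonneg, le_refl _⟩, rfl⟩, ?_⟩
    rw [hxy.2.1]
    linarith
end

section
/- Let δ ≥ 0. There exists a constant C depending only on δ with the following property. Let X be a geodesic δ-hyperbolic metric space, let λ : ℝ → X be a geodesic line and let τ : [0,∞) → X be a geodesic ray with τ(0) = λ(0). Define σ₊, σ₋ : ℝ → X by σ±(t) = τ(t) for t ≥ 0 and σ±(t) = λ(±t) for t < 0. Then at least one of σ₊, σ₋ is a (1, C)-quasi-geodesic: it satisfies |s − t| − C ≤ d(σ(s), σ(t)) ≤ |s − t| + C for all s, t ∈ ℝ. -/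
universe u

/-- Gromov product based at `o`. -/
noncomputable def gpr {X : Type u} [MetricSpace X] (o x y : X) : ℝ :=
  (dist x o + dist y o - dist x y) / 2

lemma gpr_symm {X : Type u} [MetricSpace X] (o x y : X) : gpr o x y = gpr o y x := by
  unfold gpr; rw [dist_comm x y]; ring

lemma gpr_nonneg {X : Type u} [MetricSpace X] (o x y : X) : 0 ≤ gpr o x y := by
  have h := dist_triangle x o y
  have h2 : dist o y = dist y o := dist_comm o y
  unfold gpr; linarith

lemma gpr_le_left {X : Type u} [MetricSpace X] (o x y : X) : gpr o x y ≤ dist x o := by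
  have h := dist_triangle y x o
  have h2 : dist y x = dist x y := dist_comm y x
  unfold gpr; linarith

lemma gpr_le_right {X : Type u} [MetricSpace X] (o x y : X) : gpr o x y ≤ dist y o := by
  rw [gpr_symm]; exact gpr_le_left o y x

lemma dist_eq_gpr {X : Type u} [MetricSpace X] (o x y : X) :
    dist x y = dist x o + dist y o - 2 * gpr o x y := by
  unfold gpr; ring

lemma gpr_hyp {X : Type u} [MetricSpace X] {δ : ℝ} (hX : GromovHyperbolic X δ)
    (o x y z : X) : gpr o x z ≥ min (gpr o x y) (gpr o y z) - δ :=
  hX x y z o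

/-- Shrinking a Gromov product along a geodesic: if `b` lies on a geodesic from `o`
to `a` (i.e. `d(a,o) = d(b,o) + d(a,b)`), then `(b|x) ≥ min(d(b,o), (a|x)) - δ`. -/
lemma gpr_shrink {X : Type u} [MetricSpace X] {δ : ℝ} (hX : GromovHyperbolic X δ)
    (o a b x : X) (h1 : dist a o = dist b o + dist a b) :
    gpr o b x ≥ min (dist b o) (gpr o a x) - δ := by
  have h := hX b a x o
  have hba : (dist b o + dist a o - dist b a) / 2 = dist b o := by
    rw [dist_comm b a]; linarith
  rw [hba] at h
  exact h

theorem stmt_11 (δ : ℝ) (hδ : 0 ≤ δ) :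
    ∃ C : ℝ, ∀ (X : Type u) [MetricSpace X],
      GromovHyperbolic X δ → GeodesicSpace X →
      ∀ lam : ℝ → X, Isometry lam →
      ∀ τ : ℝ → X,
        (∀ s ∈ Set.Ici (0 : ℝ), ∀ t ∈ Set.Ici (0 : ℝ), dist (τ s) (τ t) = |s - t|) →
        τ 0 = lam 0 →
      ∃ σ : ℝ → X,
        (∀ t : ℝ, 0 ≤ t → σ t = τ t) ∧
        ((∀ t : ℝ, t < 0 → σ t = lam t) ∨ (∀ t : ℝ, t < 0 → σ t = lam (-t))) ∧
        ∀ s t : ℝ, |s - t| - C ≤ dist (σ s) (σ t) ∧ dist (σ s) (σ t) ≤ |s - t| + C := by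
  refine ⟨6 * δ + 2, fun X _ hX _ lam hlam τ hτ h0 => ?_⟩
  set o : X := lam 0 with ho
  set K : ℝ := 3 * δ + 1 with hKdef
  have hK0 : (0 : ℝ) ≤ K := by rw [hKdef]; linarith
  have hlamd : ∀ a b : ℝ, dist (lam a) (lam b) = |a - b| := by
    intro a b; rw [hlam.dist_eq, Real.dist_eq]
  have hlamo : ∀ t : ℝ, dist (lam t) o = |t| := by
    intro t; rw [ho, hlamd, sub_zero]
  have hτo : ∀ s : ℝ, 0 ≤ s → dist (τ s) o = s := by
    intro s hs
    have h := hτ s (Set.mem_Ici.mpr hs) 0 (Set.mem_Ici.mpr le_rfl)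
    rw [h0] at h
    rw [h, sub_zero, abs_of_nonneg hs]
  -- the key exclusion: τ cannot have large Gromov product with both ends of λ
  have key : ∀ s₁ t₁ s₂ t₂ : ℝ, 0 ≤ s₁ → 0 ≤ t₁ → 0 ≤ s₂ → 0 ≤ t₂ →
      K < gpr o (τ s₁) (lam (-t₁)) → K < gpr o (τ s₂) (lam t₂) → False := by
    intro s₁ t₁ s₂ t₂ hs₁ ht₁ hs₂ ht₂ hg₁ hg₂
    have hKs₁ : K ≤ s₁ := by
      have := gpr_le_left o (τ s₁) (lam (-t₁)); rw [hτo s₁ hs₁] at this; linarith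
    have hKt₁ : K ≤ t₁ := by
      have := gpr_le_right o (τ s₁) (lam (-t₁))
      rw [hlamo, abs_neg, abs_of_nonneg ht₁] at this; linarith
    have hKs₂ : K ≤ s₂ := by
      have := gpr_le_left o (τ s₂) (lam t₂); rw [hτo s₂ hs₂] at this; linarith
    have hKt₂ : K ≤ t₂ := by
      have := gpr_le_right o (τ s₂) (lam t₂)
      rw [hlamo, abs_of_nonneg ht₂] at this; linarith
    -- shrink along τ on side 1
    have e1 : dist (τ s₁) o = dist (τ K) o + dist (τ s₁) (τ K) := by
      rw [hτo s₁ hs₁, hτo K hK0, hτ s₁ (Set.mem_Ici.mpr hs₁) K (Set.mem_Ici.mpr hK0), abs_of_nonneg (by linarith)]; ring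
    have A1 := gpr_shrink hX o (τ s₁) (τ K) (lam (-t₁)) e1
    rw [hτo K hK0] at A1
    have a1 : K - δ ≤ gpr o (τ K) (lam (-t₁)) := by
      have hm : K ≤ min K (gpr o (τ s₁) (lam (-t₁))) := le_min le_rfl hg₁.le
      linarith
    -- shrink along λ on side 1
    have e2 : dist (lam (-t₁)) o = dist (lam (-K)) o + dist (lam (-t₁)) (lam (-K)) := by
      rw [hlamo, hlamo, abs_neg, abs_neg, abs_of_nonneg ht₁, abs_of_nonneg hK0, hlamd]
      rw [show (-t₁ - -K) = -(t₁ - K) by ring, abs_neg, abs_of_nonneg (by linarith)]; ring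
    have B1 := gpr_shrink hX o (lam (-t₁)) (lam (-K)) (τ K) e2
    rw [hlamo, abs_neg, abs_of_nonneg hK0, gpr_symm o (lam (-t₁)) (τ K)] at B1
    have b1 : K - 2 * δ ≤ gpr o (lam (-K)) (τ K) := by
      have hm : K - δ ≤ min K (gpr o (τ K) (lam (-t₁))) := le_min (by linarith) a1
      linarith
    -- shrink along τ on side 2
    have e3 : dist (τ s₂) o = dist (τ K) o + dist (τ s₂) (τ K) := by
      rw [hτo s₂ hs₂, hτo K hK0, hτ s₂ (Set.mem_Ici.mpr hs₂) K (Set.mem_Ici.mpr hK0), abs_of_nonneg (by linarith)]; ring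
    have A2 := gpr_shrink hX o (τ s₂) (τ K) (lam t₂) e3
    rw [hτo K hK0] at A2
    have a2 : K - δ ≤ gpr o (τ K) (lam t₂) := by
      have hm : K ≤ min K (gpr o (τ s₂) (lam t₂)) := le_min le_rfl hg₂.le
      linarith
    -- shrink along λ on side 2
    have e4 : dist (lam t₂) o = dist (lam K) o + dist (lam t₂) (lam K) := by
      rw [hlamo, hlamo, abs_of_nonneg ht₂, abs_of_nonneg hK0, hlamd,
        abs_of_nonneg (by linarith : (0:ℝ) ≤ t₂ - K)]; ring
    have B2 := gpr_shrink hX o (lam t₂) (lam K) (τ K) e4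
    rw [hlamo, abs_of_nonneg hK0, gpr_symm o (lam t₂) (τ K)] at B2
    have b2 : K - 2 * δ ≤ gpr o (lam K) (τ K) := by
      have hm : K - δ ≤ min K (gpr o (τ K) (lam t₂)) := le_min (by linarith) a2
      linarith
    -- combine: Gromov product of the two ends of λ is 0
    have F := gpr_hyp hX o (lam K) (τ K) (lam (-K))
    rw [gpr_symm o (τ K) (lam (-K))] at F
    have hm : K - 2 * δ ≤ min (gpr o (lam K) (τ K)) (gpr o (lam (-K)) (τ K)) :=
      le_min b2 b1
    have hzero : gpr o (lam K) (lam (-K)) = 0 := by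
      unfold gpr
      rw [hlamo, hlamo, abs_neg, abs_of_nonneg hK0, hlamd,
        abs_of_nonneg (by linarith : (0:ℝ) ≤ K - -K)]
      ring
    rw [hzero] at F
    rw [hKdef] at hm F
    linarith
  -- common construction given a "negative side" ray ν with small products
  have main : ∀ ν : ℝ → X, (ν 0 = o) →
      (∀ a b : ℝ, 0 ≤ a → 0 ≤ b → dist (ν a) (ν b) = |a - b|) →
      (∀ s : ℝ, 0 ≤ s → ∀ v : ℝ, 0 ≤ v → gpr o (τ s) (ν v) ≤ K) →
      ∀ s t : ℝ, |s - t| - (6 * δ + 2) ≤ dist ((fun r => if 0 ≤ r then τ r else ν (-r)) s)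
          ((fun r => if 0 ≤ r then τ r else ν (-r)) t) ∧
        dist ((fun r => if 0 ≤ r then τ r else ν (-r)) s)
          ((fun r => if 0 ≤ r then τ r else ν (-r)) t) ≤ |s - t| + (6 * δ + 2) := by
    intro ν hν0 hνd hgp s t
    have hνo : ∀ v : ℝ, 0 ≤ v → dist (ν v) o = v := by
      intro v hv
      rw [← hν0, hνd v 0 hv le_rfl, sub_zero, abs_of_nonneg hv]
    have hC : (0 : ℝ) ≤ 6 * δ + 2 := by linarith
    have mixed : ∀ a b : ℝ, 0 ≤ a → b < 0 →
        |a - b| - (6 * δ + 2) ≤ dist (τ a) (ν (-b)) ∧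
          dist (τ a) (ν (-b)) ≤ |a - b| + (6 * δ + 2) := by
      intro a b ha hb
      have hnb : 0 ≤ -b := by linarith
      have habs : |a - b| = a + -b := abs_of_nonneg (by linarith)
      have hd := dist_eq_gpr o (τ a) (ν (-b))
      rw [hτo a ha, hνo (-b) hnb] at hd
      have hg1 := hgp a ha (-b) hnb
      have hg2 := gpr_nonneg o (τ a) (ν (-b))
      constructor
      · rw [habs, hd]; linarith
      · rw [habs, hd]; linarith
    by_cases hs : 0 ≤ s <;> by_cases ht : 0 ≤ t <;> simp only [hs, ht, if_pos, if_neg,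
      if_true, if_false]
    · rw [hτ s (Set.mem_Ici.mpr hs) t (Set.mem_Ici.mpr ht)]
      constructor <;> linarith
    · exact mixed s t hs (lt_of_not_ge ht)
    · have h := mixed t s ht (lt_of_not_ge hs)
      rw [dist_comm, abs_sub_comm s t]
      exact h
    · rw [hνd (-s) (-t) (by linarith [lt_of_not_ge hs]) (by linarith [lt_of_not_ge ht]),
        show (-s - -t) = -(s - t) by ring, abs_neg]
      constructor <;> linarith
  by_cases hcase : ∀ s : ℝ, 0 ≤ s → ∀ v : ℝ, 0 ≤ v → gpr o (τ s) (lam (-v)) ≤ K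
  · -- σ t = lam t for t < 0 ; here ν v = lam (-v)
    refine ⟨fun r => if 0 ≤ r then τ r else lam (-(-r)), ?_, Or.inl ?_, ?_⟩
    · intro t htt; simp [htt]
    · intro t htt; simp [not_le.mpr htt]
    · have hm := main (fun v => lam (-v)) (by simp [ho]) ?_ hcase
      · intro s t; exact hm s t
      · intro a b ha hb
        simp only [hlamd]
        rw [show (-a - -b) = -(a - b) by ring, abs_neg]
  · -- there exist s₁, v₁ with big product on the negative side;
    -- then all products on the positive side are small
    push_neg at hcase
    obtain ⟨s₁, hs₁, v₁, hv₁, hbig⟩ := hcase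
    have hsmall : ∀ s : ℝ, 0 ≤ s → ∀ v : ℝ, 0 ≤ v → gpr o (τ s) (lam v) ≤ K := by
      intro s hs v hv
      by_contra hbad
      push_neg at hbad
      exact key s₁ v₁ s v hs₁ hv₁ hs hv hbig hbad
    refine ⟨fun r => if 0 ≤ r then τ r else lam (-r), ?_, Or.inr ?_, ?_⟩
    · intro t htt; simp [htt]
    · intro t htt; simp [not_le.mpr htt]
    · have hm := main (fun v => lam v) (by simp [ho]) ?_ hsmall
      · intro s t; exact hm s t
      · intro a b ha hb; simp only [hlamd]
end
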